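/- Let G be a finitely generated group with inverse-closed generating set Σ = X ∪ X⁻¹. The word problem WP(G, X) is a visibly pushdown language (for some partition of Σ) if and only if G is finite. -/

import Mathlib

/-! A finite group's word problem is regular (its left quotients are the sets of words spelling a
fixed element), and a finite automaton is a visibly pushdown automaton all of whose letters are
internal.

Conversely, let a visibly pushdown automaton recognise the word problem, and record for each word
`w` the set of states reachable after reading it. If a suffix `x` never pops below its starting
height, whether `w x` is accepted depends only on this finite record; with no call letters that
holds for every `x`, because the stack stays empty. Appending a word spelling `g⁻¹` then shows that
the record of a word spelling `g` determines `g`. When there is a call letter `c`, the words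
`t^m c^m` with `t` spelling `c⁻¹` first force `c` to have some finite order `d`, and prefixing a
test word `x` by `c^(d |x|)` keeps its value while making it non-underflowing. -/

inductive VKind | call | internal | response
deriving DecidableEq

/-- A (nondeterministic) visibly pushdown automaton over alphabet `A`
partitioned by `kind` into call, internal and response letters. -/
structure VPA (A : Type) (kind : A → VKind) where
  Q : Type
  Γ : Type
  [finQ : Fintype Q]
  [finΓ : Fintype Γ]
  init : Q
  accept : Set Q
  /-- transitions on call letters: push one symbol, do not inspect the stack -/
  δc : Q → A → Set (Q × Γ)
  /-- transitions on internal letters: do not inspect or modify the stack -/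
  δi : Q → A → Set Q
  /-- transitions on response letters: pop the topmost stack symbol -/
  δr : Q → A → Γ → Set Q
  /-- transitions on response letters read on the empty stack (bottom symbol) -/
  δb : Q → A → Set Q

namespace VPA

variable {A : Type} {kind : A → VKind}

inductive Steps (M : VPA A kind) : M.Q × List M.Γ → List A → M.Q × List M.Γ → Prop
  | nil (c) : Steps M c [] c
  | call {q s a q' γ w c} : kind a = .call → (q', γ) ∈ M.δc q a →
      Steps M (q', γ :: s) w c → Steps M (q, s) (a :: w) c
  | internal {q s a q' w c} : kind a = .internal → q' ∈ M.δi q a →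
      Steps M (q', s) w c → Steps M (q, s) (a :: w) c
  | pop {q γ s a q' w c} : kind a = .response → q' ∈ M.δr q a γ →
      Steps M (q', s) w c → Steps M (q, γ :: s) (a :: w) c
  | popEmpty {q a q' w c} : kind a = .response → q' ∈ M.δb q a →
      Steps M (q', []) w c → Steps M (q, []) (a :: w) c

/-- A VPA accepts a word if reading it from the initial state with empty stack
can end in an accepting state (with arbitrary stack contents). -/
def Accepts (M : VPA A kind) (w : List A) : Prop :=
  ∃ c : M.Q × List M.Γ, M.Steps (M.init, []) w c ∧ c.1 ∈ M.accept

end VPA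

/-- `L` is a visibly pushdown language over the partition `kind`. -/
def IsVPL {A : Type} (kind : A → VKind) (L : Set (List A)) : Prop :=
  ∃ M : VPA A kind, L = {w | M.Accepts w}

section WordProblem

variable {G A : Type*} [Group G] (σ : A → G)

theorem exists_list_map_prod_eq (hinv : ∀ s : A, ∃ t : A, σ t = (σ s)⁻¹)
    (hgen : Subgroup.closure (Set.range σ) = ⊤) (g : G) : ∃ w : List A, (w.map σ).prod = g := by
  have hsymm : Set.range σ ∪ (Set.range σ)⁻¹ = Set.range σ := by
    refine Set.union_eq_left.mpr ?_
    rintro _ ⟨s, hs⟩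
    obtain ⟨t, ht⟩ := hinv s
    exact ⟨t, by rw [ht, hs, inv_inv]⟩
  have hg : g ∈ Submonoid.closure (Set.range σ) := by
    rw [← hsymm, ← Subgroup.closure_toSubmonoid, hgen]
    exact Subgroup.mem_top g
  rw [← FreeMonoid.mrange_lift] at hg
  obtain ⟨w, rfl⟩ := hg
  exact ⟨w.toList, (FreeMonoid.lift_apply σ w).symm⟩

theorem isRegular_wordProblem [Finite G] :
    Language.IsRegular {w : List A | (w.map σ).prod = 1} := by
  refine .of_finite_range_leftQuotient <|
    (Set.finite_range fun g : G => {x : List A | g * (x.map σ).prod = 1}).subset ?_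
  rintro _ ⟨u, rfl⟩
  exact ⟨(u.map σ).prod, by ext x; change _ ↔ ((u ++ x).map σ).prod = 1; simp⟩

theorem finite_of_separating_tests {β : Type*} [Finite β] (f : List A → β) (x : G → List A)
    (hx : ∀ g, ((x g).map σ).prod = g)
    (hf : ∀ g u v, f u = f v → ((u ++ x g).map σ).prod = 1 → ((v ++ x g).map σ).prod = 1) :
    Finite G := by
  refine Finite.of_injective (f ∘ x) fun g g' h => ?_
  have := hf g⁻¹ (x g) (x g') h (by simp [hx])
  simp only [List.map_append, List.prod_append, hx] at this
  exact (mul_inv_eq_one.mp this).symm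

end WordProblem

/-- Reading `w` from a stack of height `n` never pops the empty stack. -/
def NoUnderflow {A : Type} (kind : A → VKind) : ℕ → List A → Prop
  | _, [] => True
  | n, a :: w =>
    match kind a with
    | .call => NoUnderflow kind (n + 1) w
    | .internal => NoUnderflow kind n w
    | .response => n ≠ 0 ∧ NoUnderflow kind (n - 1) w

section NoUnderflow

variable {A : Type} {kind : A → VKind}

theorem noUnderflow_of_length_le : ∀ {n : ℕ} {w : List A}, w.length ≤ n → NoUnderflow kind n w
  | _, [], _ => trivial
  | n, a :: w, h => by
    rw [List.length_cons] at h
    unfold NoUnderflow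
    split
    · exact noUnderflow_of_length_le (by omega)
    · exact noUnderflow_of_length_le (by omega)
    · exact ⟨by omega, noUnderflow_of_length_le (by omega)⟩

theorem noUnderflow_replicate_append {c : A} (hc : kind c = .call) {y : List A} :
    ∀ {n N : ℕ}, NoUnderflow kind (n + N) y → NoUnderflow kind n (List.replicate N c ++ y)
  | _, 0, h => h
  | n, N + 1, h => by
    simp only [List.replicate_succ, List.cons_append, NoUnderflow, hc]
    exact noUnderflow_replicate_append hc (by rwa [Nat.add_right_comm, Nat.add_assoc])

end NoUnderflow

namespace VPA

variable {A : Type} {kind : A → VKind} (M : VPA A kind)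

def reach (w : List A) : Set M.Q :=
  {q | ∃ s, M.Steps (M.init, []) w (q, s)}

def AcceptsFrom (q : M.Q) (x : List A) : Prop :=
  ∃ c, M.Steps (q, []) x c ∧ c.1 ∈ M.accept

variable {M}

theorem Steps.append {c₀ c₁ c₂ : M.Q × List M.Γ} {w v : List A} (h : M.Steps c₀ w c₁)
    (h' : M.Steps c₁ v c₂) : M.Steps c₀ (w ++ v) c₂ := by
  induction h with
  | nil => exact h'
  | call hk hm _ ih => exact .call hk hm (ih h')
  | internal hk hm _ ih => exact .internal hk hm (ih h')
  | pop hk hm _ ih => exact .pop hk hm (ih h')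
  | popEmpty hk hm _ ih => exact .popEmpty hk hm (ih h')

theorem Steps.exists_of_append {w v : List A} :
    ∀ {c₀ c₂ : M.Q × List M.Γ}, M.Steps c₀ (w ++ v) c₂ →
      ∃ c₁, M.Steps c₀ w c₁ ∧ M.Steps c₁ v c₂ := by
  induction w with
  | nil => exact fun h => ⟨_, .nil _, h⟩
  | cons a w ih =>
    intro c₀ c₂ h
    cases h with
    | call hk hm h =>
      obtain ⟨c₁, h₁, h₂⟩ := ih h
      exact ⟨c₁, .call hk hm h₁, h₂⟩
    | internal hk hm h =>
      obtain ⟨c₁, h₁, h₂⟩ := ih h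
      exact ⟨c₁, .internal hk hm h₁, h₂⟩
    | pop hk hm h =>
      obtain ⟨c₁, h₁, h₂⟩ := ih h
      exact ⟨c₁, .pop hk hm h₁, h₂⟩
    | popEmpty hk hm h =>
      obtain ⟨c₁, h₁, h₂⟩ := ih h
      exact ⟨c₁, .popEmpty hk hm h₁, h₂⟩

theorem Steps.snd_eq_nil {c₀ c : M.Q × List M.Γ} {w : List A} (h : M.Steps c₀ w c)
    (hw : ∀ a ∈ w, kind a ≠ .call) (h₀ : c₀.2 = []) : c.2 = [] := by
  induction h with
  | nil => exact h₀
  | call hk => exact absurd hk (hw _ List.mem_cons_self)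
  | internal _ _ _ ih => exact ih (fun b hb => hw b (List.mem_cons_of_mem _ hb)) h₀
  | pop => exact absurd h₀ (List.cons_ne_nil _ _)
  | popEmpty _ _ _ ih => exact ih (fun b hb => hw b (List.mem_cons_of_mem _ hb)) rfl

/-- A run that never pops below the part `u` of the stack does not see what lies beneath. -/
theorem Steps.replace_bottom {c₀ c : M.Q × List M.Γ} {x : List A} (h : M.Steps c₀ x c) :
    ∀ {u s : List M.Γ}, NoUnderflow kind u.length x → c₀.2 = u ++ s →
      ∃ u', c.2 = u' ++ s ∧ ∀ s', M.Steps (c₀.1, u ++ s') x (c.1, u' ++ s') := by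
  induction h with
  | nil => exact fun _ h₀ => ⟨_, h₀, fun _ => .nil _⟩
  | @call _ _ _ _ γ _ _ hk hm _ ih =>
    intro u s hx h₀
    simp only [NoUnderflow, hk] at hx
    obtain ⟨u', hc, hrun⟩ := ih (u := γ :: u) hx (congrArg (γ :: ·) h₀)
    exact ⟨u', hc, fun s' => .call hk hm (hrun s')⟩
  | internal hk hm _ ih =>
    intro u s hx h₀
    simp only [NoUnderflow, hk] at hx
    obtain ⟨u', hc, hrun⟩ := ih hx h₀
    exact ⟨u', hc, fun s' => .internal hk hm (hrun s')⟩
  | pop hk hm _ ih =>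
    intro u s hx h₀
    simp only [NoUnderflow, hk] at hx
    obtain ⟨hu, hx⟩ := hx
    obtain _ | ⟨γ, u⟩ := u
    · exact absurd rfl hu
    simp only [List.cons_append, List.cons.injEq] at h₀
    obtain ⟨rfl, h₀⟩ := h₀
    obtain ⟨u', hc, hrun⟩ := ih (u := u) hx h₀
    exact ⟨u', hc, fun s' => .pop hk hm (hrun s')⟩
  | popEmpty hk =>
    intro u s hx h₀
    simp only [NoUnderflow, hk] at hx
    obtain rfl := (List.append_eq_nil_iff.mp h₀.symm).1
    exact absurd rfl hx.1

theorem accepts_append_iff_of_noUnderflow {x : List A} (hx : NoUnderflow kind 0 x)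
    (w : List A) : M.Accepts (w ++ x) ↔ ∃ q ∈ M.reach w, M.AcceptsFrom q x := by
  constructor
  · rintro ⟨c, hrun, hc⟩
    obtain ⟨⟨q, s⟩, hw, hx'⟩ := Steps.exists_of_append hrun
    obtain ⟨u', -, hrun'⟩ := hx'.replace_bottom (u := []) hx rfl
    exact ⟨q, ⟨s, hw⟩, (c.1, u'), by simpa using hrun' [], hc⟩
  · rintro ⟨q, ⟨s, hw⟩, c, hx', hc⟩
    obtain ⟨u', -, hrun'⟩ := hx'.replace_bottom (u := []) hx rfl
    exact ⟨(c.1, u' ++ s), hw.append (hrun' s), hc⟩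

theorem accepts_append_iff_of_forall_ne_call {w : List A} (hw : ∀ a ∈ w, kind a ≠ .call)
    (x : List A) : M.Accepts (w ++ x) ↔ ∃ q ∈ M.reach w, M.AcceptsFrom q x := by
  constructor
  · rintro ⟨c, hrun, hc⟩
    obtain ⟨⟨q, s⟩, hw', hx⟩ := Steps.exists_of_append hrun
    obtain rfl : s = [] := hw'.snd_eq_nil hw rfl
    exact ⟨q, ⟨[], hw'⟩, c, hx, hc⟩
  · rintro ⟨q, ⟨s, hw'⟩, c, hx, hc⟩
    obtain rfl : s = [] := hw'.snd_eq_nil hw rfl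
    exact ⟨c, hw'.append hx, hc⟩

variable {G : Type*} [Group G] {σ : A → G}

theorem isOfFinOrder_of_call (hM : ∀ w, (w.map σ).prod = 1 ↔ M.Accepts w) {c t : A}
    (hc : kind c = .call) (ht : σ t = (σ c)⁻¹) : IsOfFinOrder (σ c) := by
  have := M.finQ
  by_contra hfin
  rw [← injective_pow_iff_not_isOfFinOrder] at hfin
  obtain ⟨m, m', hne, hreach⟩ :=
    Finite.exists_ne_map_eq_of_infinite fun n => M.reach (List.replicate n t)
  refine hne (hfin ?_)
  have hcalls : NoUnderflow kind 0 (List.replicate m' c) := by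
    simpa using noUnderflow_replicate_append (y := []) hc trivial
  have hacc : M.Accepts (List.replicate m' t ++ List.replicate m' c) := (hM _).mp (by simp [ht])
  rw [accepts_append_iff_of_noUnderflow hcalls, ← hreach,
    ← accepts_append_iff_of_noUnderflow hcalls, ← hM] at hacc
  simpa [ht, inv_mul_eq_one] using hacc

theorem finite_of_wordProblem (hinv : ∀ s : A, ∃ t : A, σ t = (σ s)⁻¹)
    (hσ : ∀ g : G, ∃ w : List A, (w.map σ).prod = g)
    (hM : ∀ w, (w.map σ).prod = 1 ↔ M.Accepts w) : Finite G := by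
  have := M.finQ
  choose rep hrep using hσ
  by_cases hcall : ∃ c, kind c = .call
  · obtain ⟨c, hc⟩ := hcall
    obtain ⟨t, ht⟩ := hinv c
    have hc_pos := (isOfFinOrder_of_call hM hc ht).orderOf_pos
    let x g := List.replicate (orderOf (σ c) * (rep g).length) c ++ rep g
    have hx (g : G) : NoUnderflow kind 0 (x g) :=
      noUnderflow_replicate_append hc <| noUnderflow_of_length_le <|
        by simpa using Nat.le_mul_of_pos_left _ hc_pos
    refine finite_of_separating_tests σ M.reach x (fun g => ?_) fun g u v huv => ?_
    · simp [x, hrep, pow_mul, pow_orderOf_eq_one]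
    · rw [hM, hM, accepts_append_iff_of_noUnderflow (hx g), huv,
        accepts_append_iff_of_noUnderflow (hx g)]
      exact id
  · push Not at hcall
    refine finite_of_separating_tests σ M.reach rep hrep fun g u v huv => ?_
    rw [hM, hM, accepts_append_iff_of_forall_ne_call (fun a _ => hcall a), huv,
      ← accepts_append_iff_of_forall_ne_call (fun a _ => hcall a)]
    exact id

end VPA

def DFA.toVPA {A S : Type} [Fintype S] (D : DFA A S) : VPA A fun _ => .internal where
  Q := S
  Γ := Empty
  init := D.start
  accept := D.accept
  δc _ _ := ∅
  δi q a := {D.step q a}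
  δr _ _ _ := ∅
  δb _ _ := ∅

theorem DFA.toVPA_steps_iff {A S : Type} [Fintype S] (D : DFA A S)
    {c₀ c : D.toVPA.Q × List D.toVPA.Γ} {w : List A} : D.toVPA.Steps c₀ w c ↔ c = (D.evalFrom c₀.1 w, c₀.2) := by
  constructor
  · intro h
    induction h with
    | nil => rfl
    | internal _ hm _ ih => rw [ih, Set.mem_singleton_iff.mp hm]; rfl
    | call hk | pop hk | popEmpty hk => cases hk
  · rintro rfl
    induction w generalizing c₀ with
    | nil => exact .nil _
    | cons a w ih => exact .internal rfl rfl ih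

theorem Language.IsRegular.isVPL {A : Type} {L : Language A} (hL : L.IsRegular) :
    IsVPL (fun _ => .internal) L := by
  obtain ⟨S, _, D, rfl⟩ := hL
  refine ⟨D.toVPA, Set.ext fun w => ⟨fun hw => ⟨_, D.toVPA_steps_iff.mpr rfl, hw⟩, ?_⟩⟩
  rintro ⟨c, hrun, hc⟩
  rw [D.toVPA_steps_iff.mp hrun] at hc
  exact hc

theorem vpl_wordProblem_iff_finite_general {G : Type} [Group G]
    {A : Type} (σ : A → G)
    (hinv : ∀ s : A, ∃ t : A, σ t = (σ s)⁻¹)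
    (hgen : Subgroup.closure (Set.range σ) = ⊤) :
    (∃ kind : A → VKind, IsVPL kind {w : List A | (w.map σ).prod = 1}) ↔ Finite G := by
  constructor
  · rintro ⟨kind, M, hM⟩
    exact VPA.finite_of_wordProblem hinv (exists_list_map_prod_eq σ hinv hgen)
      fun w => Set.ext_iff.mp hM w
  · exact fun _ => ⟨_, (isRegular_wordProblem σ).isVPL⟩

/-- A finitely generated group has visibly pushdown word problem (for some
partition of its inverse-closed generating alphabet) if and only if it is
finite. -/
theorem vpl_wordProblem_iff_finite {G : Type} [Group G]
    {A : Type} [Fintype A] (σ : A → G)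
    (hinv : ∀ s : A, ∃ t : A, σ t = (σ s)⁻¹)
    (hgen : Subgroup.closure (Set.range σ) = ⊤) :
    (∃ kind : A → VKind, IsVPL kind {w : List A | (w.map σ).prod = 1}) ↔ Finite G :=
  vpl_wordProblem_iff_finite_general σ hinv hgen
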